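/- arXiv:1103.2776 — 2 statements merged into one kernel-verified Lean document; each statement's English description precedes it below -/
import Mathlib

section
/- On (ℂ²)^{⊗3}, for all real couplings J_x, J_y, J_z, the anisotropic Heisenberg Hamiltonian H_H = J_x (σ^x_1 σ^x_2 + σ^x_2 σ^x_3) + J_y (σ^y_1 σ^y_2 + σ^y_2 σ^y_3) + J_z (σ^z_1 σ^z_2 + σ^z_2 σ^z_3) and the dual Hamiltonian H_H^D = J_x (σ^z_2 + σ^z_3 σ^z_1) − J_y (σ^x_3 σ^z_2 + σ^z_3 σ^x_2 σ^z_1) + J_z (σ^x_3 + σ^x_2) are unitarily equivalent: there exists a unitary 𝒰 on (ℂ²)^{⊗3}, independent of J_x, J_y, J_z, with 𝒰 H_H 𝒰* = H_H^D. In particular the two 8×8 Hermitian matrices have the same characteristic polynomial, i.e. identical energy levels with identical degeneracies. -/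
open Matrix

noncomputable def pauliX : Matrix (Fin 2) (Fin 2) ℂ := !![0, 1; 1, 0]

noncomputable def pauliZ : Matrix (Fin 2) (Fin 2) ℂ := !![1, 0; 0, -1]

/-- The operator acting as the 2×2 matrix `A` on the (1-based) `k`-th tensor factor of
`(ℂ²)^{⊗N} ≅ ℂ^{2^N}` and as the identity on all other factors. -/
noncomputable def siteOp (N : ℕ) (A : Matrix (Fin 2) (Fin 2) ℂ) (k : ℕ) :
    Matrix (Fin N → Fin 2) (Fin N → Fin 2) ℂ :=
  if h : 1 ≤ k ∧ k ≤ N then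
    Matrix.of fun f g =>
      A (f ⟨k - 1, by omega⟩) (g ⟨k - 1, by omega⟩) *
        ∏ j ∈ Finset.univ.erase (⟨k - 1, by omega⟩ : Fin N),
          (if f j = g j then (1 : ℂ) else 0)
  else 1

noncomputable def pauliY : Matrix (Fin 2) (Fin 2) ℂ := !![0, -Complex.I; Complex.I, 0]

/-- The anisotropic Heisenberg Hamiltonian on a 3-site chain:
`H_H = J_x (σ^x_1 σ^x_2 + σ^x_2 σ^x_3) + J_y (σ^y_1 σ^y_2 + σ^y_2 σ^y_3)
       + J_z (σ^z_1 σ^z_2 + σ^z_2 σ^z_3)`. -/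
noncomputable def heisenberg3 (Jx Jy Jz : ℝ) :
    Matrix (Fin 3 → Fin 2) (Fin 3 → Fin 2) ℂ :=
  (Jx : ℂ) • (siteOp 3 pauliX 1 * siteOp 3 pauliX 2 + siteOp 3 pauliX 2 * siteOp 3 pauliX 3)
    + (Jy : ℂ) • (siteOp 3 pauliY 1 * siteOp 3 pauliY 2 + siteOp 3 pauliY 2 * siteOp 3 pauliY 3)
    + (Jz : ℂ) • (siteOp 3 pauliZ 1 * siteOp 3 pauliZ 2 + siteOp 3 pauliZ 2 * siteOp 3 pauliZ 3)

/-- The dual Hamiltonian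
`H_H^D = J_x (σ^z_2 + σ^z_3 σ^z_1) − J_y (σ^x_3 σ^z_2 + σ^z_3 σ^x_2 σ^z_1)
        + J_z (σ^x_3 + σ^x_2)`. -/
noncomputable def heisenberg3Dual (Jx Jy Jz : ℝ) :
    Matrix (Fin 3 → Fin 2) (Fin 3 → Fin 2) ℂ :=
  (Jx : ℂ) • (siteOp 3 pauliZ 2 + siteOp 3 pauliZ 3 * siteOp 3 pauliZ 1)
    - (Jy : ℂ) • (siteOp 3 pauliX 3 * siteOp 3 pauliZ 2
        + siteOp 3 pauliZ 3 * siteOp 3 pauliX 2 * siteOp 3 pauliZ 1)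
    + (Jz : ℂ) • (siteOp 3 pauliX 3 + siteOp 3 pauliX 2)

section Aux

lemma vec8_0 {α : Type*} (a0 a1 a2 a3 a4 a5 a6 a7 : α) : ![a0, a1, a2, a3, a4, a5, a6, a7] (0 : Fin 8) = a0 := rfl
lemma vec8_0' {α : Type*} (a0 a1 a2 a3 a4 a5 a6 a7 : α) (h : 0 < 8) : ![a0, a1, a2, a3, a4, a5, a6, a7] (⟨0, h⟩ : Fin 8) = a0 := rfl
lemma vec8_1 {α : Type*} (a0 a1 a2 a3 a4 a5 a6 a7 : α) : ![a0, a1, a2, a3, a4, a5, a6, a7] (1 : Fin 8) = a1 := rfl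
lemma vec8_1' {α : Type*} (a0 a1 a2 a3 a4 a5 a6 a7 : α) (h : 1 < 8) : ![a0, a1, a2, a3, a4, a5, a6, a7] (⟨1, h⟩ : Fin 8) = a1 := rfl
lemma vec8_2 {α : Type*} (a0 a1 a2 a3 a4 a5 a6 a7 : α) : ![a0, a1, a2, a3, a4, a5, a6, a7] (2 : Fin 8) = a2 := rfl
lemma vec8_2' {α : Type*} (a0 a1 a2 a3 a4 a5 a6 a7 : α) (h : 2 < 8) : ![a0, a1, a2, a3, a4, a5, a6, a7] (⟨2, h⟩ : Fin 8) = a2 := rfl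
lemma vec8_3 {α : Type*} (a0 a1 a2 a3 a4 a5 a6 a7 : α) : ![a0, a1, a2, a3, a4, a5, a6, a7] (3 : Fin 8) = a3 := rfl
lemma vec8_3' {α : Type*} (a0 a1 a2 a3 a4 a5 a6 a7 : α) (h : 3 < 8) : ![a0, a1, a2, a3, a4, a5, a6, a7] (⟨3, h⟩ : Fin 8) = a3 := rfl
lemma vec8_4 {α : Type*} (a0 a1 a2 a3 a4 a5 a6 a7 : α) : ![a0, a1, a2, a3, a4, a5, a6, a7] (4 : Fin 8) = a4 := rfl
lemma vec8_4' {α : Type*} (a0 a1 a2 a3 a4 a5 a6 a7 : α) (h : 4 < 8) : ![a0, a1, a2, a3, a4, a5, a6, a7] (⟨4, h⟩ : Fin 8) = a4 := rfl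
lemma vec8_5 {α : Type*} (a0 a1 a2 a3 a4 a5 a6 a7 : α) : ![a0, a1, a2, a3, a4, a5, a6, a7] (5 : Fin 8) = a5 := rfl
lemma vec8_5' {α : Type*} (a0 a1 a2 a3 a4 a5 a6 a7 : α) (h : 5 < 8) : ![a0, a1, a2, a3, a4, a5, a6, a7] (⟨5, h⟩ : Fin 8) = a5 := rfl
lemma vec8_6 {α : Type*} (a0 a1 a2 a3 a4 a5 a6 a7 : α) : ![a0, a1, a2, a3, a4, a5, a6, a7] (6 : Fin 8) = a6 := rfl
lemma vec8_6' {α : Type*} (a0 a1 a2 a3 a4 a5 a6 a7 : α) (h : 6 < 8) : ![a0, a1, a2, a3, a4, a5, a6, a7] (⟨6, h⟩ : Fin 8) = a6 := rfl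
lemma vec8_7 {α : Type*} (a0 a1 a2 a3 a4 a5 a6 a7 : α) : ![a0, a1, a2, a3, a4, a5, a6, a7] (7 : Fin 8) = a7 := rfl
lemma vec8_7' {α : Type*} (a0 a1 a2 a3 a4 a5 a6 a7 : α) (h : 7 < 8) : ![a0, a1, a2, a3, a4, a5, a6, a7] (⟨7, h⟩ : Fin 8) = a7 := rfl
lemma vec3_0 {α : Type*} (a0 a1 a2 : α) : ![a0, a1, a2] (0 : Fin 3) = a0 := rfl
lemma vec3_0' {α : Type*} (a0 a1 a2 : α) (h : 0 < 3) : ![a0, a1, a2] (⟨0, h⟩ : Fin 3) = a0 := rfl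
lemma vec3_1 {α : Type*} (a0 a1 a2 : α) : ![a0, a1, a2] (1 : Fin 3) = a1 := rfl
lemma vec3_1' {α : Type*} (a0 a1 a2 : α) (h : 1 < 3) : ![a0, a1, a2] (⟨1, h⟩ : Fin 3) = a1 := rfl
lemma vec3_2 {α : Type*} (a0 a1 a2 : α) : ![a0, a1, a2] (2 : Fin 3) = a2 := rfl
lemma vec3_2' {α : Type*} (a0 a1 a2 : α) (h : 2 < 3) : ![a0, a1, a2] (⟨2, h⟩ : Fin 3) = a2 := rfl
lemma vec2_0 {α : Type*} (a0 a1 : α) : ![a0, a1] (0 : Fin 2) = a0 := rfl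
lemma vec2_0' {α : Type*} (a0 a1 : α) (h : 0 < 2) : ![a0, a1] (⟨0, h⟩ : Fin 2) = a0 := rfl
lemma vec2_1 {α : Type*} (a0 a1 : α) : ![a0, a1] (1 : Fin 2) = a1 := rfl
lemma vec2_1' {α : Type*} (a0 a1 : α) (h : 1 < 2) : ![a0, a1] (⟨1, h⟩ : Fin 2) = a1 := rfl

def bits : Fin 8 → Fin 3 → Fin 2 :=
  ![![0,0,0], ![0,0,1], ![0,1,0], ![0,1,1], ![1,0,0], ![1,0,1], ![1,1,0], ![1,1,1]]

def enc : (Fin 3 → Fin 2) ≃ Fin 8 where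
  toFun f := ⟨4 * (f 0 : ℕ) + 2 * (f 1 : ℕ) + (f 2 : ℕ), by
    have := (f 0).isLt; have := (f 1).isLt; have := (f 2).isLt; omega⟩
  invFun := bits
  left_inv := by decide
  right_inv := by decide

lemma siteOp3_apply_1 (A : Matrix (Fin 2) (Fin 2) ℂ) (f g : Fin 3 → Fin 2) :
    siteOp 3 A 1 f g
      = A (f 0) (g 0) * ((if f 1 = g 1 then (1:ℂ) else 0) * (if f 2 = g 2 then (1:ℂ) else 0)) := by
  rw [siteOp, dif_pos (by norm_num)]
  have h : (Finset.univ.erase (⟨1 - 1, by omega⟩ : Fin 3)) = {1, 2} := by decide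
  rw [Matrix.of_apply, h, Finset.prod_insert (by decide), Finset.prod_singleton]
  rfl

lemma siteOp3_apply_2 (A : Matrix (Fin 2) (Fin 2) ℂ) (f g : Fin 3 → Fin 2) :
    siteOp 3 A 2 f g
      = A (f 1) (g 1) * ((if f 0 = g 0 then (1:ℂ) else 0) * (if f 2 = g 2 then (1:ℂ) else 0)) := by
  rw [siteOp, dif_pos (by norm_num)]
  have h : (Finset.univ.erase (⟨2 - 1, by omega⟩ : Fin 3)) = {0, 2} := by decide
  rw [Matrix.of_apply, h, Finset.prod_insert (by decide), Finset.prod_singleton]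
  rfl

lemma siteOp3_apply_3 (A : Matrix (Fin 2) (Fin 2) ℂ) (f g : Fin 3 → Fin 2) :
    siteOp 3 A 3 f g
      = A (f 2) (g 2) * ((if f 0 = g 0 then (1:ℂ) else 0) * (if f 1 = g 1 then (1:ℂ) else 0)) := by
  rw [siteOp, dif_pos (by norm_num)]
  have h : (Finset.univ.erase (⟨3 - 1, by omega⟩ : Fin 3)) = {0, 1} := by decide
  rw [Matrix.of_apply, h, Finset.prod_insert (by decide), Finset.prod_singleton]
  rfl

noncomputable def mx1 : Matrix (Fin 8) (Fin 8) ℂ :=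
  !![0, 0, 0, 0, 1, 0, 0, 0;
     0, 0, 0, 0, 0, 1, 0, 0;
     0, 0, 0, 0, 0, 0, 1, 0;
     0, 0, 0, 0, 0, 0, 0, 1;
     1, 0, 0, 0, 0, 0, 0, 0;
     0, 1, 0, 0, 0, 0, 0, 0;
     0, 0, 1, 0, 0, 0, 0, 0;
     0, 0, 0, 1, 0, 0, 0, 0]

noncomputable def mx2 : Matrix (Fin 8) (Fin 8) ℂ :=
  !![0, 0, 1, 0, 0, 0, 0, 0;
     0, 0, 0, 1, 0, 0, 0, 0;
     1, 0, 0, 0, 0, 0, 0, 0;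
     0, 1, 0, 0, 0, 0, 0, 0;
     0, 0, 0, 0, 0, 0, 1, 0;
     0, 0, 0, 0, 0, 0, 0, 1;
     0, 0, 0, 0, 1, 0, 0, 0;
     0, 0, 0, 0, 0, 1, 0, 0]

noncomputable def mx3 : Matrix (Fin 8) (Fin 8) ℂ :=
  !![0, 1, 0, 0, 0, 0, 0, 0;
     1, 0, 0, 0, 0, 0, 0, 0;
     0, 0, 0, 1, 0, 0, 0, 0;
     0, 0, 1, 0, 0, 0, 0, 0;
     0, 0, 0, 0, 0, 1, 0, 0;
     0, 0, 0, 0, 1, 0, 0, 0;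
     0, 0, 0, 0, 0, 0, 0, 1;
     0, 0, 0, 0, 0, 0, 1, 0]

noncomputable def my1 : Matrix (Fin 8) (Fin 8) ℂ :=
  !![0, 0, 0, 0, (-Complex.I), 0, 0, 0;
     0, 0, 0, 0, 0, (-Complex.I), 0, 0;
     0, 0, 0, 0, 0, 0, (-Complex.I), 0;
     0, 0, 0, 0, 0, 0, 0, (-Complex.I);
     Complex.I, 0, 0, 0, 0, 0, 0, 0;
     0, Complex.I, 0, 0, 0, 0, 0, 0;
     0, 0, Complex.I, 0, 0, 0, 0, 0;
     0, 0, 0, Complex.I, 0, 0, 0, 0]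

noncomputable def my2 : Matrix (Fin 8) (Fin 8) ℂ :=
  !![0, 0, (-Complex.I), 0, 0, 0, 0, 0;
     0, 0, 0, (-Complex.I), 0, 0, 0, 0;
     Complex.I, 0, 0, 0, 0, 0, 0, 0;
     0, Complex.I, 0, 0, 0, 0, 0, 0;
     0, 0, 0, 0, 0, 0, (-Complex.I), 0;
     0, 0, 0, 0, 0, 0, 0, (-Complex.I);
     0, 0, 0, 0, Complex.I, 0, 0, 0;
     0, 0, 0, 0, 0, Complex.I, 0, 0]

noncomputable def my3 : Matrix (Fin 8) (Fin 8) ℂ :=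
  !![0, (-Complex.I), 0, 0, 0, 0, 0, 0;
     Complex.I, 0, 0, 0, 0, 0, 0, 0;
     0, 0, 0, (-Complex.I), 0, 0, 0, 0;
     0, 0, Complex.I, 0, 0, 0, 0, 0;
     0, 0, 0, 0, 0, (-Complex.I), 0, 0;
     0, 0, 0, 0, Complex.I, 0, 0, 0;
     0, 0, 0, 0, 0, 0, 0, (-Complex.I);
     0, 0, 0, 0, 0, 0, Complex.I, 0]

noncomputable def mz1 : Matrix (Fin 8) (Fin 8) ℂ :=
  !![1, 0, 0, 0, 0, 0, 0, 0;
     0, 1, 0, 0, 0, 0, 0, 0;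
     0, 0, 1, 0, 0, 0, 0, 0;
     0, 0, 0, 1, 0, 0, 0, 0;
     0, 0, 0, 0, -1, 0, 0, 0;
     0, 0, 0, 0, 0, -1, 0, 0;
     0, 0, 0, 0, 0, 0, -1, 0;
     0, 0, 0, 0, 0, 0, 0, -1]

noncomputable def mz2 : Matrix (Fin 8) (Fin 8) ℂ :=
  !![1, 0, 0, 0, 0, 0, 0, 0;
     0, 1, 0, 0, 0, 0, 0, 0;
     0, 0, -1, 0, 0, 0, 0, 0;
     0, 0, 0, -1, 0, 0, 0, 0;
     0, 0, 0, 0, 1, 0, 0, 0;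
     0, 0, 0, 0, 0, 1, 0, 0;
     0, 0, 0, 0, 0, 0, -1, 0;
     0, 0, 0, 0, 0, 0, 0, -1]

noncomputable def mz3 : Matrix (Fin 8) (Fin 8) ℂ :=
  !![1, 0, 0, 0, 0, 0, 0, 0;
     0, -1, 0, 0, 0, 0, 0, 0;
     0, 0, 1, 0, 0, 0, 0, 0;
     0, 0, 0, -1, 0, 0, 0, 0;
     0, 0, 0, 0, 1, 0, 0, 0;
     0, 0, 0, 0, 0, -1, 0, 0;
     0, 0, 0, 0, 0, 0, 1, 0;
     0, 0, 0, 0, 0, 0, 0, -1]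

noncomputable def p_x12 : Matrix (Fin 8) (Fin 8) ℂ :=
  !![0, 0, 0, 0, 0, 0, 1, 0;
     0, 0, 0, 0, 0, 0, 0, 1;
     0, 0, 0, 0, 1, 0, 0, 0;
     0, 0, 0, 0, 0, 1, 0, 0;
     0, 0, 1, 0, 0, 0, 0, 0;
     0, 0, 0, 1, 0, 0, 0, 0;
     1, 0, 0, 0, 0, 0, 0, 0;
     0, 1, 0, 0, 0, 0, 0, 0]

noncomputable def p_x23 : Matrix (Fin 8) (Fin 8) ℂ :=
  !![0, 0, 0, 1, 0, 0, 0, 0;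
     0, 0, 1, 0, 0, 0, 0, 0;
     0, 1, 0, 0, 0, 0, 0, 0;
     1, 0, 0, 0, 0, 0, 0, 0;
     0, 0, 0, 0, 0, 0, 0, 1;
     0, 0, 0, 0, 0, 0, 1, 0;
     0, 0, 0, 0, 0, 1, 0, 0;
     0, 0, 0, 0, 1, 0, 0, 0]

noncomputable def p_y12 : Matrix (Fin 8) (Fin 8) ℂ :=
  !![0, 0, 0, 0, 0, 0, -1, 0;
     0, 0, 0, 0, 0, 0, 0, -1;
     0, 0, 0, 0, 1, 0, 0, 0;
     0, 0, 0, 0, 0, 1, 0, 0;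
     0, 0, 1, 0, 0, 0, 0, 0;
     0, 0, 0, 1, 0, 0, 0, 0;
     -1, 0, 0, 0, 0, 0, 0, 0;
     0, -1, 0, 0, 0, 0, 0, 0]

noncomputable def p_y23 : Matrix (Fin 8) (Fin 8) ℂ :=
  !![0, 0, 0, -1, 0, 0, 0, 0;
     0, 0, 1, 0, 0, 0, 0, 0;
     0, 1, 0, 0, 0, 0, 0, 0;
     -1, 0, 0, 0, 0, 0, 0, 0;
     0, 0, 0, 0, 0, 0, 0, -1;
     0, 0, 0, 0, 0, 0, 1, 0;
     0, 0, 0, 0, 0, 1, 0, 0;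
     0, 0, 0, 0, -1, 0, 0, 0]

noncomputable def p_z12 : Matrix (Fin 8) (Fin 8) ℂ :=
  !![1, 0, 0, 0, 0, 0, 0, 0;
     0, 1, 0, 0, 0, 0, 0, 0;
     0, 0, -1, 0, 0, 0, 0, 0;
     0, 0, 0, -1, 0, 0, 0, 0;
     0, 0, 0, 0, -1, 0, 0, 0;
     0, 0, 0, 0, 0, -1, 0, 0;
     0, 0, 0, 0, 0, 0, 1, 0;
     0, 0, 0, 0, 0, 0, 0, 1]

noncomputable def p_z23 : Matrix (Fin 8) (Fin 8) ℂ :=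
  !![1, 0, 0, 0, 0, 0, 0, 0;
     0, -1, 0, 0, 0, 0, 0, 0;
     0, 0, -1, 0, 0, 0, 0, 0;
     0, 0, 0, 1, 0, 0, 0, 0;
     0, 0, 0, 0, 1, 0, 0, 0;
     0, 0, 0, 0, 0, -1, 0, 0;
     0, 0, 0, 0, 0, 0, -1, 0;
     0, 0, 0, 0, 0, 0, 0, 1]

noncomputable def p_z31 : Matrix (Fin 8) (Fin 8) ℂ :=
  !![1, 0, 0, 0, 0, 0, 0, 0;
     0, -1, 0, 0, 0, 0, 0, 0;
     0, 0, 1, 0, 0, 0, 0, 0;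
     0, 0, 0, -1, 0, 0, 0, 0;
     0, 0, 0, 0, -1, 0, 0, 0;
     0, 0, 0, 0, 0, 1, 0, 0;
     0, 0, 0, 0, 0, 0, -1, 0;
     0, 0, 0, 0, 0, 0, 0, 1]

noncomputable def p_xz32 : Matrix (Fin 8) (Fin 8) ℂ :=
  !![0, 1, 0, 0, 0, 0, 0, 0;
     1, 0, 0, 0, 0, 0, 0, 0;
     0, 0, 0, -1, 0, 0, 0, 0;
     0, 0, -1, 0, 0, 0, 0, 0;
     0, 0, 0, 0, 0, 1, 0, 0;
     0, 0, 0, 0, 1, 0, 0, 0;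
     0, 0, 0, 0, 0, 0, 0, -1;
     0, 0, 0, 0, 0, 0, -1, 0]

noncomputable def p_zx32 : Matrix (Fin 8) (Fin 8) ℂ :=
  !![0, 0, 1, 0, 0, 0, 0, 0;
     0, 0, 0, -1, 0, 0, 0, 0;
     1, 0, 0, 0, 0, 0, 0, 0;
     0, -1, 0, 0, 0, 0, 0, 0;
     0, 0, 0, 0, 0, 0, 1, 0;
     0, 0, 0, 0, 0, 0, 0, -1;
     0, 0, 0, 0, 1, 0, 0, 0;
     0, 0, 0, 0, 0, -1, 0, 0]

noncomputable def p_zxz : Matrix (Fin 8) (Fin 8) ℂ :=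
  !![0, 0, 1, 0, 0, 0, 0, 0;
     0, 0, 0, -1, 0, 0, 0, 0;
     1, 0, 0, 0, 0, 0, 0, 0;
     0, -1, 0, 0, 0, 0, 0, 0;
     0, 0, 0, 0, 0, 0, -1, 0;
     0, 0, 0, 0, 0, 0, 0, 1;
     0, 0, 0, 0, -1, 0, 0, 0;
     0, 0, 0, 0, 0, 1, 0, 0]

noncomputable def wMat : Matrix (Fin 8) (Fin 8) ℂ :=
  !![1, 0, 0, 1, 0, 1, 1, 0;
     1, 0, 0, -1, 0, -1, 1, 0;
     1, 0, 0, 1, 0, -1, -1, 0;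
     1, 0, 0, -1, 0, 1, -1, 0;
     0, 1, -1, 0, -1, 0, 0, 1;
     0, 1, 1, 0, 1, 0, 0, 1;
     0, -1, 1, 0, -1, 0, 0, 1;
     0, -1, -1, 0, 1, 0, 0, 1]


lemma toSub {A : Matrix (Fin 2) (Fin 2) ℂ} {k : ℕ} {M : Matrix (Fin 8) (Fin 8) ℂ}
    (h : ∀ i j : Fin 8, siteOp 3 A k (bits i) (bits j) = M i j) :
    siteOp 3 A k = M.submatrix enc enc := by
  ext f g
  have := h (enc f) (enc g)
  rwa [show bits (enc f) = f from enc.left_inv f,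
    show bits (enc g) = g from enc.left_inv g] at this

lemma site_mx1 : siteOp 3 pauliX 1 = mx1.submatrix enc enc := by
  apply toSub
  intro i j
  fin_cases i <;> fin_cases j <;>
    simp only [siteOp3_apply_1, bits, pauliX, mx1, Matrix.of_apply, Matrix.submatrix_apply,
      vec8_0, vec8_1, vec8_2, vec8_3, vec8_4, vec8_5, vec8_6, vec8_7, vec8_0', vec8_1', vec8_2', vec8_3', vec8_4', vec8_5', vec8_6', vec8_7', vec3_0, vec3_1, vec3_2, vec3_0', vec3_1', vec3_2', vec2_0, vec2_1, vec2_0', vec2_1'] <;> norm_num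

lemma site_mx2 : siteOp 3 pauliX 2 = mx2.submatrix enc enc := by
  apply toSub
  intro i j
  fin_cases i <;> fin_cases j <;>
    simp only [siteOp3_apply_2, bits, pauliX, mx2, Matrix.of_apply, Matrix.submatrix_apply,
      vec8_0, vec8_1, vec8_2, vec8_3, vec8_4, vec8_5, vec8_6, vec8_7, vec8_0', vec8_1', vec8_2', vec8_3', vec8_4', vec8_5', vec8_6', vec8_7', vec3_0, vec3_1, vec3_2, vec3_0', vec3_1', vec3_2', vec2_0, vec2_1, vec2_0', vec2_1'] <;> norm_num

lemma site_mx3 : siteOp 3 pauliX 3 = mx3.submatrix enc enc := by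
  apply toSub
  intro i j
  fin_cases i <;> fin_cases j <;>
    simp only [siteOp3_apply_3, bits, pauliX, mx3, Matrix.of_apply, Matrix.submatrix_apply,
      vec8_0, vec8_1, vec8_2, vec8_3, vec8_4, vec8_5, vec8_6, vec8_7, vec8_0', vec8_1', vec8_2', vec8_3', vec8_4', vec8_5', vec8_6', vec8_7', vec3_0, vec3_1, vec3_2, vec3_0', vec3_1', vec3_2', vec2_0, vec2_1, vec2_0', vec2_1'] <;> norm_num

lemma site_my1 : siteOp 3 pauliY 1 = my1.submatrix enc enc := by
  apply toSub
  intro i j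
  fin_cases i <;> fin_cases j <;>
    simp only [siteOp3_apply_1, bits, pauliY, my1, Matrix.of_apply, Matrix.submatrix_apply,
      vec8_0, vec8_1, vec8_2, vec8_3, vec8_4, vec8_5, vec8_6, vec8_7, vec8_0', vec8_1', vec8_2', vec8_3', vec8_4', vec8_5', vec8_6', vec8_7', vec3_0, vec3_1, vec3_2, vec3_0', vec3_1', vec3_2', vec2_0, vec2_1, vec2_0', vec2_1'] <;> norm_num

lemma site_my2 : siteOp 3 pauliY 2 = my2.submatrix enc enc := by
  apply toSub
  intro i j
  fin_cases i <;> fin_cases j <;>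
    simp only [siteOp3_apply_2, bits, pauliY, my2, Matrix.of_apply, Matrix.submatrix_apply,
      vec8_0, vec8_1, vec8_2, vec8_3, vec8_4, vec8_5, vec8_6, vec8_7, vec8_0', vec8_1', vec8_2', vec8_3', vec8_4', vec8_5', vec8_6', vec8_7', vec3_0, vec3_1, vec3_2, vec3_0', vec3_1', vec3_2', vec2_0, vec2_1, vec2_0', vec2_1'] <;> norm_num

lemma site_my3 : siteOp 3 pauliY 3 = my3.submatrix enc enc := by
  apply toSub
  intro i j
  fin_cases i <;> fin_cases j <;>
    simp only [siteOp3_apply_3, bits, pauliY, my3, Matrix.of_apply, Matrix.submatrix_apply,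
      vec8_0, vec8_1, vec8_2, vec8_3, vec8_4, vec8_5, vec8_6, vec8_7, vec8_0', vec8_1', vec8_2', vec8_3', vec8_4', vec8_5', vec8_6', vec8_7', vec3_0, vec3_1, vec3_2, vec3_0', vec3_1', vec3_2', vec2_0, vec2_1, vec2_0', vec2_1'] <;> norm_num

lemma site_mz1 : siteOp 3 pauliZ 1 = mz1.submatrix enc enc := by
  apply toSub
  intro i j
  fin_cases i <;> fin_cases j <;>
    simp only [siteOp3_apply_1, bits, pauliZ, mz1, Matrix.of_apply, Matrix.submatrix_apply,
      vec8_0, vec8_1, vec8_2, vec8_3, vec8_4, vec8_5, vec8_6, vec8_7, vec8_0', vec8_1', vec8_2', vec8_3', vec8_4', vec8_5', vec8_6', vec8_7', vec3_0, vec3_1, vec3_2, vec3_0', vec3_1', vec3_2', vec2_0, vec2_1, vec2_0', vec2_1'] <;> norm_num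

lemma site_mz2 : siteOp 3 pauliZ 2 = mz2.submatrix enc enc := by
  apply toSub
  intro i j
  fin_cases i <;> fin_cases j <;>
    simp only [siteOp3_apply_2, bits, pauliZ, mz2, Matrix.of_apply, Matrix.submatrix_apply,
      vec8_0, vec8_1, vec8_2, vec8_3, vec8_4, vec8_5, vec8_6, vec8_7, vec8_0', vec8_1', vec8_2', vec8_3', vec8_4', vec8_5', vec8_6', vec8_7', vec3_0, vec3_1, vec3_2, vec3_0', vec3_1', vec3_2', vec2_0, vec2_1, vec2_0', vec2_1'] <;> norm_num

lemma site_mz3 : siteOp 3 pauliZ 3 = mz3.submatrix enc enc := by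
  apply toSub
  intro i j
  fin_cases i <;> fin_cases j <;>
    simp only [siteOp3_apply_3, bits, pauliZ, mz3, Matrix.of_apply, Matrix.submatrix_apply,
      vec8_0, vec8_1, vec8_2, vec8_3, vec8_4, vec8_5, vec8_6, vec8_7, vec8_0', vec8_1', vec8_2', vec8_3', vec8_4', vec8_5', vec8_6', vec8_7', vec3_0, vec3_1, vec3_2, vec3_0', vec3_1', vec3_2', vec2_0, vec2_1, vec2_0', vec2_1'] <;> norm_num

lemma mul_p_x12 : mx1 * mx2 = p_x12 := by
  ext i j
  fin_cases i <;> fin_cases j <;>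
    simp only [Matrix.mul_apply, Fin.sum_univ_eight, mx1, mx2, p_x12, Matrix.of_apply,
      vec8_0, vec8_1, vec8_2, vec8_3, vec8_4, vec8_5, vec8_6, vec8_7, vec8_0', vec8_1', vec8_2', vec8_3', vec8_4', vec8_5', vec8_6', vec8_7', vec3_0, vec3_1, vec3_2, vec3_0', vec3_1', vec3_2', vec2_0, vec2_1, vec2_0', vec2_1'] <;> norm_num [Complex.I_mul_I]

lemma mul_p_x23 : mx2 * mx3 = p_x23 := by
  ext i j
  fin_cases i <;> fin_cases j <;>
    simp only [Matrix.mul_apply, Fin.sum_univ_eight, mx2, mx3, p_x23, Matrix.of_apply,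
      vec8_0, vec8_1, vec8_2, vec8_3, vec8_4, vec8_5, vec8_6, vec8_7, vec8_0', vec8_1', vec8_2', vec8_3', vec8_4', vec8_5', vec8_6', vec8_7', vec3_0, vec3_1, vec3_2, vec3_0', vec3_1', vec3_2', vec2_0, vec2_1, vec2_0', vec2_1'] <;> norm_num [Complex.I_mul_I]

lemma mul_p_y12 : my1 * my2 = p_y12 := by
  ext i j
  fin_cases i <;> fin_cases j <;>
    simp only [Matrix.mul_apply, Fin.sum_univ_eight, my1, my2, p_y12, Matrix.of_apply,
      vec8_0, vec8_1, vec8_2, vec8_3, vec8_4, vec8_5, vec8_6, vec8_7, vec8_0', vec8_1', vec8_2', vec8_3', vec8_4', vec8_5', vec8_6', vec8_7', vec3_0, vec3_1, vec3_2, vec3_0', vec3_1', vec3_2', vec2_0, vec2_1, vec2_0', vec2_1'] <;> norm_num [Complex.I_mul_I]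

lemma mul_p_y23 : my2 * my3 = p_y23 := by
  ext i j
  fin_cases i <;> fin_cases j <;>
    simp only [Matrix.mul_apply, Fin.sum_univ_eight, my2, my3, p_y23, Matrix.of_apply,
      vec8_0, vec8_1, vec8_2, vec8_3, vec8_4, vec8_5, vec8_6, vec8_7, vec8_0', vec8_1', vec8_2', vec8_3', vec8_4', vec8_5', vec8_6', vec8_7', vec3_0, vec3_1, vec3_2, vec3_0', vec3_1', vec3_2', vec2_0, vec2_1, vec2_0', vec2_1'] <;> norm_num [Complex.I_mul_I]

lemma mul_p_z12 : mz1 * mz2 = p_z12 := by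
  ext i j
  fin_cases i <;> fin_cases j <;>
    simp only [Matrix.mul_apply, Fin.sum_univ_eight, mz1, mz2, p_z12, Matrix.of_apply,
      vec8_0, vec8_1, vec8_2, vec8_3, vec8_4, vec8_5, vec8_6, vec8_7, vec8_0', vec8_1', vec8_2', vec8_3', vec8_4', vec8_5', vec8_6', vec8_7', vec3_0, vec3_1, vec3_2, vec3_0', vec3_1', vec3_2', vec2_0, vec2_1, vec2_0', vec2_1'] <;> norm_num [Complex.I_mul_I]

lemma mul_p_z23 : mz2 * mz3 = p_z23 := by
  ext i j
  fin_cases i <;> fin_cases j <;>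
    simp only [Matrix.mul_apply, Fin.sum_univ_eight, mz2, mz3, p_z23, Matrix.of_apply,
      vec8_0, vec8_1, vec8_2, vec8_3, vec8_4, vec8_5, vec8_6, vec8_7, vec8_0', vec8_1', vec8_2', vec8_3', vec8_4', vec8_5', vec8_6', vec8_7', vec3_0, vec3_1, vec3_2, vec3_0', vec3_1', vec3_2', vec2_0, vec2_1, vec2_0', vec2_1'] <;> norm_num [Complex.I_mul_I]

lemma mul_p_z31 : mz3 * mz1 = p_z31 := by
  ext i j
  fin_cases i <;> fin_cases j <;>
    simp only [Matrix.mul_apply, Fin.sum_univ_eight, mz3, mz1, p_z31, Matrix.of_apply,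
      vec8_0, vec8_1, vec8_2, vec8_3, vec8_4, vec8_5, vec8_6, vec8_7, vec8_0', vec8_1', vec8_2', vec8_3', vec8_4', vec8_5', vec8_6', vec8_7', vec3_0, vec3_1, vec3_2, vec3_0', vec3_1', vec3_2', vec2_0, vec2_1, vec2_0', vec2_1'] <;> norm_num [Complex.I_mul_I]

lemma mul_p_xz32 : mx3 * mz2 = p_xz32 := by
  ext i j
  fin_cases i <;> fin_cases j <;>
    simp only [Matrix.mul_apply, Fin.sum_univ_eight, mx3, mz2, p_xz32, Matrix.of_apply,
      vec8_0, vec8_1, vec8_2, vec8_3, vec8_4, vec8_5, vec8_6, vec8_7, vec8_0', vec8_1', vec8_2', vec8_3', vec8_4', vec8_5', vec8_6', vec8_7', vec3_0, vec3_1, vec3_2, vec3_0', vec3_1', vec3_2', vec2_0, vec2_1, vec2_0', vec2_1'] <;> norm_num [Complex.I_mul_I]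

lemma mul_p_zx32 : mz3 * mx2 = p_zx32 := by
  ext i j
  fin_cases i <;> fin_cases j <;>
    simp only [Matrix.mul_apply, Fin.sum_univ_eight, mz3, mx2, p_zx32, Matrix.of_apply,
      vec8_0, vec8_1, vec8_2, vec8_3, vec8_4, vec8_5, vec8_6, vec8_7, vec8_0', vec8_1', vec8_2', vec8_3', vec8_4', vec8_5', vec8_6', vec8_7', vec3_0, vec3_1, vec3_2, vec3_0', vec3_1', vec3_2', vec2_0, vec2_1, vec2_0', vec2_1'] <;> norm_num [Complex.I_mul_I]

lemma mul_p_zxz : p_zx32 * mz1 = p_zxz := by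
  ext i j
  fin_cases i <;> fin_cases j <;>
    simp only [Matrix.mul_apply, Fin.sum_univ_eight, p_zx32, mz1, p_zxz, Matrix.of_apply,
      vec8_0, vec8_1, vec8_2, vec8_3, vec8_4, vec8_5, vec8_6, vec8_7, vec8_0', vec8_1', vec8_2', vec8_3', vec8_4', vec8_5', vec8_6', vec8_7', vec3_0, vec3_1, vec3_2, vec3_0', vec3_1', vec3_2', vec2_0, vec2_1, vec2_0', vec2_1'] <;> norm_num [Complex.I_mul_I]

lemma wMat_mul_conj : wMat * wMatᴴ = (4:ℂ) • 1 := by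
  ext i j
  fin_cases i <;> fin_cases j <;>
    simp only [Matrix.mul_apply, Fin.sum_univ_eight, wMat, Matrix.conjTranspose_apply,
      Matrix.smul_apply, Matrix.one_apply, Matrix.of_apply, vec8_0, vec8_1, vec8_2, vec8_3, vec8_4, vec8_5, vec8_6, vec8_7, vec8_0', vec8_1', vec8_2', vec8_3', vec8_4', vec8_5', vec8_6', vec8_7', vec3_0, vec3_1, vec3_2, vec3_0', vec3_1', vec3_2', vec2_0, vec2_1, vec2_0', vec2_1'] <;> norm_num [Fin.ext_iff]

lemma wMat_conj_mul : wMatᴴ * wMat = (4:ℂ) • 1 := by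
  ext i j
  fin_cases i <;> fin_cases j <;>
    simp only [Matrix.mul_apply, Fin.sum_univ_eight, wMat, Matrix.conjTranspose_apply,
      Matrix.smul_apply, Matrix.one_apply, Matrix.of_apply, vec8_0, vec8_1, vec8_2, vec8_3, vec8_4, vec8_5, vec8_6, vec8_7, vec8_0', vec8_1', vec8_2', vec8_3', vec8_4', vec8_5', vec8_6', vec8_7', vec3_0, vec3_1, vec3_2, vec3_0', vec3_1', vec3_2', vec2_0, vec2_1, vec2_0', vec2_1'] <;> norm_num [Fin.ext_iff]

lemma wKeyX : wMat * (p_x12 + p_x23) = (mz2 + p_z31) * wMat := by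
  ext i j
  fin_cases i <;> fin_cases j <;>
    simp only [Matrix.mul_apply, Fin.sum_univ_eight, Matrix.add_apply, wMat,
      p_x12, p_x23, mz2, p_z31, Matrix.of_apply, vec8_0, vec8_1, vec8_2, vec8_3, vec8_4, vec8_5, vec8_6, vec8_7, vec8_0', vec8_1', vec8_2', vec8_3', vec8_4', vec8_5', vec8_6', vec8_7', vec3_0, vec3_1, vec3_2, vec3_0', vec3_1', vec3_2', vec2_0, vec2_1, vec2_0', vec2_1'] <;> norm_num

lemma wKeyY : wMat * (p_y12 + p_y23) = -((p_xz32 + p_zxz) * wMat) := by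
  ext i j
  fin_cases i <;> fin_cases j <;>
    simp only [Matrix.mul_apply, Fin.sum_univ_eight, Matrix.add_apply, Matrix.neg_apply, wMat,
      p_y12, p_y23, p_xz32, p_zxz, Matrix.of_apply, vec8_0, vec8_1, vec8_2, vec8_3, vec8_4, vec8_5, vec8_6, vec8_7, vec8_0', vec8_1', vec8_2', vec8_3', vec8_4', vec8_5', vec8_6', vec8_7', vec3_0, vec3_1, vec3_2, vec3_0', vec3_1', vec3_2', vec2_0, vec2_1, vec2_0', vec2_1'] <;> norm_num

lemma wKeyZ : wMat * (p_z12 + p_z23) = (mx3 + mx2) * wMat := by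
  ext i j
  fin_cases i <;> fin_cases j <;>
    simp only [Matrix.mul_apply, Fin.sum_univ_eight, Matrix.add_apply, wMat,
      p_z12, p_z23, mx3, mx2, Matrix.of_apply, vec8_0, vec8_1, vec8_2, vec8_3, vec8_4, vec8_5, vec8_6, vec8_7, vec8_0', vec8_1', vec8_2', vec8_3', vec8_4', vec8_5', vec8_6', vec8_7', vec3_0, vec3_1, vec3_2, vec3_0', vec3_1', vec3_2', vec2_0, vec2_1, vec2_0', vec2_1'] <;> norm_num

noncomputable def hh8 (Jx Jy Jz : ℝ) : Matrix (Fin 8) (Fin 8) ℂ :=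
  (Jx : ℂ) • (p_x12 + p_x23) + (Jy : ℂ) • (p_y12 + p_y23) + (Jz : ℂ) • (p_z12 + p_z23)

noncomputable def dd8 (Jx Jy Jz : ℝ) : Matrix (Fin 8) (Fin 8) ℂ :=
  (Jx : ℂ) • (mz2 + p_z31) - (Jy : ℂ) • (p_xz32 + p_zxz) + (Jz : ℂ) • (mx3 + mx2)

lemma smulSub (c : ℂ) (M : Matrix (Fin 8) (Fin 8) ℂ) :
    (c • M).submatrix enc enc = c • M.submatrix enc enc := rfl

lemma heis_eq (Jx Jy Jz : ℝ) :
    heisenberg3 Jx Jy Jz = (hh8 Jx Jy Jz).submatrix enc enc := by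
  rw [heisenberg3, site_mx1, site_mx2, site_mx3, site_my1, site_my2, site_my3,
    site_mz1, site_mz2, site_mz3, hh8]
  simp only [Matrix.submatrix_mul_equiv, mul_p_x12, mul_p_x23, mul_p_y12, mul_p_y23,
    mul_p_z12, mul_p_z23]
  rfl

lemma dual_eq (Jx Jy Jz : ℝ) :
    heisenberg3Dual Jx Jy Jz = (dd8 Jx Jy Jz).submatrix enc enc := by
  rw [heisenberg3Dual, site_mx2, site_mx3, site_mz1, site_mz2, site_mz3, dd8]
  simp only [Matrix.submatrix_mul_equiv, mul_p_z31, mul_p_xz32, mul_p_zx32, mul_p_zxz]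
  rfl

lemma wKey (Jx Jy Jz : ℝ) : wMat * hh8 Jx Jy Jz = dd8 Jx Jy Jz * wMat := by
  rw [hh8, dd8, Matrix.mul_add, Matrix.mul_add, mul_smul_comm, mul_smul_comm, mul_smul_comm,
    wKeyX, wKeyY, wKeyZ]
  simp only [Matrix.add_mul, Matrix.sub_mul, smul_mul_assoc, smul_neg]
  module

lemma conj8 (Jx Jy Jz : ℝ) :
    wMat * hh8 Jx Jy Jz * wMatᴴ = (4:ℂ) • dd8 Jx Jy Jz := by
  rw [wKey, mul_assoc, wMat_mul_conj, mul_smul_comm, mul_one]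

lemma oneSub : ((4:ℂ) • (1 : Matrix (Fin 8) (Fin 8) ℂ)).submatrix enc enc
    = (4:ℂ) • (1 : Matrix (Fin 3 → Fin 2) (Fin 3 → Fin 2) ℂ) := by
  rw [smulSub, Matrix.submatrix_one_equiv]

lemma charpoly_conj {n : Type*} [Fintype n] [DecidableEq n] (U M V : Matrix n n ℂ)
    (h1 : U * V = 1) : (U * M * V).charpoly = M.charpoly := by
  classical
  set CU := (Polynomial.C : ℂ →+* Polynomial ℂ).mapMatrix U with hCU
  set CV := (Polynomial.C : ℂ →+* Polynomial ℂ).mapMatrix V with hCV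
  have hUV : CU * CV = 1 := by
    rw [hCU, hCV, ← RingHom.map_mul, h1, RingHom.map_one]
  have key : charmatrix (U * M * V) = CU * charmatrix M * CV := by
    unfold charmatrix
    rw [Matrix.mul_sub, Matrix.sub_mul]
    congr 1
    · have c1 : Matrix.scalar n (Polynomial.X : Polynomial ℂ) * CU
          = CU * Matrix.scalar n (Polynomial.X : Polynomial ℂ) :=
        (Matrix.scalar_commute (Polynomial.X : Polynomial ℂ) (fun r => Commute.all _ _) CU).eq
      rw [← c1, mul_assoc, hUV, mul_one]
    · rw [hCU, hCV, ← RingHom.map_mul, ← RingHom.map_mul]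
  rw [Matrix.charpoly, Matrix.charpoly, key, Matrix.det_mul, Matrix.det_mul]
  have hd : CU.det * CV.det = 1 := by rw [← Matrix.det_mul, hUV, Matrix.det_one]
  calc CU.det * (charmatrix M).det * CV.det
      = (CU.det * CV.det) * (charmatrix M).det := by ring
    _ = (charmatrix M).det := by rw [hd, one_mul]

end Aux

/-- **A duality for the 3-site anisotropic quantum Heisenberg model**: a single
coupling-independent unitary conjugates `H_H` into `H_H^D` for all couplings; in
particular the two Hamiltonians have identical spectra with identical degeneracies. -/
theorem heisenberg3_duality :
    ∃ U : Matrix (Fin 3 → Fin 2) (Fin 3 → Fin 2) ℂ,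
      U ∈ Matrix.unitaryGroup (Fin 3 → Fin 2) ℂ ∧
      ∀ Jx Jy Jz : ℝ,
        U * heisenberg3 Jx Jy Jz * Uᴴ = heisenberg3Dual Jx Jy Jz ∧
        (heisenberg3 Jx Jy Jz).charpoly = (heisenberg3Dual Jx Jy Jz).charpoly := by
  set U : Matrix (Fin 3 → Fin 2) (Fin 3 → Fin 2) ℂ
      := (2:ℂ)⁻¹ • wMat.submatrix enc enc with hU
  have hUH : Uᴴ = (2:ℂ)⁻¹ • wMatᴴ.submatrix enc enc := by
    rw [hU, Matrix.conjTranspose_smul, Matrix.conjTranspose_submatrix]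
    congr 1
    simp
  have hUUH : U * Uᴴ = 1 := by
    rw [hU, hUH, Matrix.smul_mul, Matrix.mul_smul, smul_smul, Matrix.submatrix_mul_equiv,
      wMat_mul_conj, oneSub, smul_smul]
    norm_num
  have hUHU : Uᴴ * U = 1 := by
    rw [hU, hUH, Matrix.smul_mul, Matrix.mul_smul, smul_smul, Matrix.submatrix_mul_equiv,
      wMat_conj_mul, oneSub, smul_smul]
    norm_num
  refine ⟨U, ?_, ?_⟩
  · rw [Matrix.mem_unitaryGroup_iff, Matrix.star_eq_conjTranspose, hUUH]
  · intro Jx Jy Jz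
    have hconj : U * heisenberg3 Jx Jy Jz * Uᴴ = heisenberg3Dual Jx Jy Jz := by
      rw [heis_eq, dual_eq, hU, hUH]
      simp only [Matrix.smul_mul, Matrix.mul_smul, Matrix.submatrix_mul_equiv, smul_smul]
      rw [conj8, smulSub, smul_smul]
      norm_num
    refine ⟨hconj, ?_⟩
    have h2 := charpoly_conj U (heisenberg3 Jx Jy Jz) Uᴴ hUUH
    rw [hconj] at h2
    exact h2.symm
end

section
/- Fix an integer N ≥ 1 and consider the square grid of sites (r¹, r²) with r¹, r² ∈ {0, …, N−1}, with one spin-1/2 per site, so operators act on (ℂ²)^{⊗N²}. For each site define the incomplete plaquette operator □ᴵσ^z_{(r¹,r²)} as the product of σ^z over those of the four sites (r¹, r²), (r¹, r²+1), (r¹−1, r²+1), (r¹−1, r²) that lie inside the grid {0,…,N−1}². Then there exists a unitary 𝒰 on (ℂ²)^{⊗N²} such that for every site (r¹, r²): 𝒰 □ᴵσ^z_{(r¹,r²)} 𝒰* = σ^x_{(r²,r¹)} and 𝒰 σ^x_{(r¹,r²)} 𝒰* = □ᴵσ^z_{(r²,r¹)}. Consequently the finite Xu–Moore Hamiltonian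 with these self-dual boundary conditions, H̃(J,h) = − Σ_{(r¹,r²)} ( J · □ᴵσ^z_{(r¹,r²)} + h · σ^x_{(r¹,r²)} ), satisfies 𝒰 H̃(J,h) 𝒰* = H̃(h,J) for all real J, h; in particular H̃(J,h) and H̃(h,J) have the same characteristic polynomial. -/
open Matrix

/-- The operator acting as the 2×2 matrix `A` on the tensor factor at site
`k ∈ {0,…,N−1}²` of `(ℂ²)^{⊗N²}` and as the identity on all other factors. -/
noncomputable def xmSite (N : ℕ) (A : Matrix (Fin 2) (Fin 2) ℂ) (k : Fin N × Fin N) :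
    Matrix (Fin N × Fin N → Fin 2) (Fin N × Fin N → Fin 2) ℂ :=
  Matrix.of fun f g =>
    A (f k) (g k) *
      ∏ j ∈ Finset.univ.erase k, (if f j = g j then (1 : ℂ) else 0)

/-- `σ^z` at the integer point `(a, b)` if it lies inside the grid `{0,…,N−1}²`, and the
identity otherwise (so that out-of-grid factors are omitted from incomplete plaquettes). -/
noncomputable def xmSz (N : ℕ) (a b : ℤ) :
    Matrix (Fin N × Fin N → Fin 2) (Fin N × Fin N → Fin 2) ℂ :=
  if h : 0 ≤ a ∧ a < (N : ℤ) ∧ 0 ≤ b ∧ b < (N : ℤ) then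
    xmSite N pauliZ (⟨a.toNat, by omega⟩, ⟨b.toNat, by omega⟩)
  else 1

/-- The incomplete plaquette operator `□ᴵσ^z_{(r¹,r²)}`: the product of `σ^z` over those of
the four sites `(r¹,r²)`, `(r¹,r²+1)`, `(r¹−1,r²+1)`, `(r¹−1,r²)` lying inside the grid. -/
noncomputable def xmPlaq (N : ℕ) (r : Fin N × Fin N) :
    Matrix (Fin N × Fin N → Fin 2) (Fin N × Fin N → Fin 2) ℂ :=
  xmSz N ((r.1 : ℕ) : ℤ) ((r.2 : ℕ) : ℤ) *
    xmSz N ((r.1 : ℕ) : ℤ) (((r.2 : ℕ) : ℤ) + 1) *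
    xmSz N (((r.1 : ℕ) : ℤ) - 1) (((r.2 : ℕ) : ℤ) + 1) *
    xmSz N (((r.1 : ℕ) : ℤ) - 1) ((r.2 : ℕ) : ℤ)

/-- The finite Xu–Moore Hamiltonian with self-dual boundary conditions:
`H̃(J,h) = − Σ_{(r¹,r²)} (J □ᴵσ^z_{(r¹,r²)} + h σ^x_{(r¹,r²)})`. -/
noncomputable def xmH (N : ℕ) (J h : ℝ) :
    Matrix (Fin N × Fin N → Fin 2) (Fin N × Fin N → Fin 2) ℂ :=
  -∑ r : Fin N × Fin N, ((J : ℂ) • xmPlaq N r + (h : ℂ) • xmSite N pauliX r)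

/-! ### Auxiliary development for the duality unitary -/

namespace XmAux

/-- configuration space -/
abbrev Cfg (N : ℕ) := Fin N × Fin N → Fin 2

/-- the sign character of `Fin 2`. -/
noncomputable def sgn : Fin 2 → ℂ := fun x => if x = 0 then 1 else -1

lemma sgn_zero : sgn 0 = 1 := rfl

lemma sgn_add (x y : Fin 2) : sgn (x + y) = sgn x * sgn y := by
  fin_cases x <;> fin_cases y <;> norm_num [sgn] <;> rfl

lemma sgn_conj (x : Fin 2) : (starRingEnd ℂ) (sgn x) = sgn x := by
  fin_cases x <;> simp [sgn]

variable {N : ℕ}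

/-- the pairing character -/
noncomputable def chi (f g : Cfg N) : ℂ := sgn (∑ k, f k * g k)

lemma chi_add_left (u v g : Cfg N) : chi (u + v) g = chi u g * chi v g := by
  unfold chi
  rw [← sgn_add]
  congr 1
  rw [← Finset.sum_add_distrib]
  exact Finset.sum_congr rfl fun k _ => by simp [add_mul]

lemma chi_add_right (u v g : Cfg N) : chi u (v + g) = chi u v * chi u g := by
  unfold chi
  rw [← sgn_add]
  congr 1
  rw [← Finset.sum_add_distrib]
  exact Finset.sum_congr rfl fun k _ => by simp [mul_add]

lemma chi_conj (u v : Cfg N) : (starRingEnd ℂ) (chi u v) = chi u v := sgn_conj _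

/-- delta configuration -/
noncomputable def dlt (r : Fin N × Fin N) : Cfg N := fun j => if j = r then 1 else 0

lemma chi_dlt (u : Cfg N) (r : Fin N × Fin N) : chi u (dlt r) = sgn (u r) := by
  unfold chi dlt
  congr 1
  rw [Finset.sum_eq_single r]
  · simp
  · intro k _ hk; simp [hk]
  · intro h; exact absurd (Finset.mem_univ r) h

lemma add_dlt_self (f : Cfg N) (r : Fin N × Fin N) : f + dlt r + dlt r = f := by
  funext j
  simp only [Pi.add_apply, dlt]
  by_cases h : j = r <;> simp [h] <;> omega

lemma eq_add_dlt_comm (f g : Cfg N) (r : Fin N × Fin N) :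
    (g = f + dlt r) ↔ (f = g + dlt r) := by
  constructor <;> intro h <;> subst h <;> rw [add_dlt_self]

lemma add_eq_zero_iff (f g : Cfg N) : f + g = 0 ↔ f = g := by
  constructor <;> intro h
  · funext j
    have := congrFun h j
    simp only [Pi.add_apply, Pi.zero_apply] at this
    omega
  · subst h; funext j; simp only [Pi.add_apply, Pi.zero_apply]; omega

lemma sum_chi (u : Cfg N) :
    ∑ h : Cfg N, chi u h = if u = 0 then (Fintype.card (Cfg N) : ℂ) else 0 := by
  by_cases hu : u = 0
  · subst hu
    rw [if_pos rfl]
    have h1 : ∀ h : Cfg N, chi 0 h = 1 := by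
      intro h; unfold chi
      have : (∑ k, (0 : Cfg N) k * h k) = 0 := by simp
      rw [this, sgn_zero]
    rw [Finset.sum_congr rfl fun h _ => h1 h, Finset.sum_const, Finset.card_univ,
      nsmul_eq_mul, mul_one]
  · rw [if_neg hu]
    obtain ⟨r, hr⟩ : ∃ r, u r ≠ 0 := by
      by_contra hc; push_neg at hc; exact hu (funext hc)
    have hur : u r = 1 := by omega
    apply Finset.sum_involution (g := fun h _ => h + dlt r)
    · intro h _
      have h2 : chi u (h + dlt r) = chi u h * chi u (dlt r) := chi_add_right u h (dlt r)
      rw [h2, chi_dlt, hur]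
      have h3 : sgn 1 = -1 := rfl
      rw [h3]; ring
    · intro h _ _
      intro hc
      have h4 : h r + dlt r r = h r := congrFun hc r
      have h6 : dlt r r = 1 := by unfold dlt; rw [if_pos rfl]
      rw [h6] at h4
      omega
    · intro a _; exact Finset.mem_univ _
    · intro h _; exact add_dlt_self h r

/-! ### Diagonalization of the z-type operators -/

lemma pauliZ_apply (x y : Fin 2) : pauliZ x y = if x = y then sgn x else 0 := by
  fin_cases x <;> fin_cases y <;> simp [pauliZ, sgn]

lemma xmSite_pauliZ (k : Fin N × Fin N) :
    xmSite N pauliZ k = Matrix.diagonal (fun f : Cfg N => sgn (f k)) := by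
  ext f g
  simp only [xmSite, Matrix.of_apply, Matrix.diagonal_apply, pauliZ_apply]
  by_cases h : f = g
  · subst h
    rw [if_pos rfl, if_pos rfl, Finset.prod_eq_one (fun j _ => if_pos rfl), mul_one]
  · rw [if_neg h]
    by_cases hk : f k = g k
    · rw [if_pos hk]
      obtain ⟨j, hj⟩ : ∃ j, f j ≠ g j := Function.ne_iff.mp h
      have hjk : j ≠ k := fun hc => hj (hc ▸ hk)
      have hz : (∏ j ∈ Finset.univ.erase k, if f j = g j then (1:ℂ) else 0) = 0 :=
        Finset.prod_eq_zero (Finset.mem_erase.mpr ⟨hjk, Finset.mem_univ j⟩) (if_neg hj)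
      rw [hz, mul_zero]
    · rw [if_neg hk, zero_mul]

/-- the value of `f` at an integer point, `0` outside the grid. -/
noncomputable def zv (N : ℕ) (f : Cfg N) (a b : ℤ) : Fin 2 :=
  if h : 0 ≤ a ∧ a < (N : ℤ) ∧ 0 ≤ b ∧ b < (N : ℤ) then
    f (⟨a.toNat, by omega⟩, ⟨b.toNat, by omega⟩)
  else 0

lemma xmSz_eq (a b : ℤ) :
    xmSz N a b = Matrix.diagonal (fun f : Cfg N => sgn (zv N f a b)) := by
  by_cases h : 0 ≤ a ∧ a < (N : ℤ) ∧ 0 ≤ b ∧ b < (N : ℤ)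
  · rw [xmSz, dif_pos h, xmSite_pauliZ]
    exact congrArg Matrix.diagonal (funext fun f => by unfold zv; rw [dif_pos h])
  · rw [xmSz, dif_neg h]
    have h2 : (fun f : Cfg N => sgn (zv N f a b)) = fun _ => 1 := by
      funext f; unfold zv; rw [dif_neg h, sgn_zero]
    rw [h2, Matrix.diagonal_one]

/-- the mod-2 plaquette value -/
noncomputable def pl (N : ℕ) (f : Cfg N) (r : Fin N × Fin N) : Fin 2 :=
  zv N f ((r.1 : ℕ) : ℤ) ((r.2 : ℕ) : ℤ) +
    zv N f ((r.1 : ℕ) : ℤ) (((r.2 : ℕ) : ℤ) + 1) +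
    zv N f (((r.1 : ℕ) : ℤ) - 1) (((r.2 : ℕ) : ℤ) + 1) +
    zv N f (((r.1 : ℕ) : ℤ) - 1) ((r.2 : ℕ) : ℤ)

lemma xmPlaq_eq (r : Fin N × Fin N) :
    xmPlaq N r = Matrix.diagonal (fun f : Cfg N => sgn (pl N f r)) := by
  rw [xmPlaq, xmSz_eq, xmSz_eq, xmSz_eq, xmSz_eq, Matrix.diagonal_mul_diagonal,
    Matrix.diagonal_mul_diagonal, Matrix.diagonal_mul_diagonal]
  refine congrArg Matrix.diagonal (funext fun f => ?_)
  unfold pl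
  rw [sgn_add, sgn_add, sgn_add]

/-- membership of site `k` in the (incomplete) plaquette at `r` -/
def memS (N : ℕ) (r k : Fin N × Fin N) : Prop :=
  ((k.1 : ℕ) = (r.1 : ℕ) ∨ (k.1 : ℕ) + 1 = (r.1 : ℕ)) ∧
    ((k.2 : ℕ) = (r.2 : ℕ) ∨ (k.2 : ℕ) = (r.2 : ℕ) + 1)

instance (r k : Fin N × Fin N) : Decidable (memS N r k) := by
  unfold memS; infer_instance

/-- indicator of plaquette membership -/
noncomputable def bS (N : ℕ) (r k : Fin N × Fin N) : Fin 2 := if memS N r k then 1 else 0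

lemma memS_self (r : Fin N × Fin N) : memS N r r := ⟨Or.inl rfl, Or.inl rfl⟩

lemma memS_symm (r k : Fin N × Fin N) : memS N (k.2, k.1) (r.2, r.1) ↔ memS N r k := by
  unfold memS; dsimp; omega

lemma bS_symm (r k : Fin N × Fin N) : bS N (k.2, k.1) (r.2, r.1) = bS N r k := by
  unfold bS
  exact if_congr (memS_symm r k) rfl rfl

lemma zv_eq_sum (f : Cfg N) (a b : ℤ) :
    zv N f a b =
      ∑ k : Fin N × Fin N, if (((k.1 : ℕ) : ℤ) = a ∧ ((k.2 : ℕ) : ℤ) = b) then f k else 0 := by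
  by_cases h : 0 ≤ a ∧ a < (N : ℤ) ∧ 0 ≤ b ∧ b < (N : ℤ)
  · unfold zv
    rw [dif_pos h]
    rw [Finset.sum_eq_single ((⟨a.toNat, by omega⟩, ⟨b.toNat, by omega⟩) : Fin N × Fin N)]
    · rw [if_pos ⟨show ((a.toNat : ℕ) : ℤ) = a by omega, show ((b.toNat : ℕ) : ℤ) = b by omega⟩]
    · intro k _ hk
      rw [if_neg]
      rintro ⟨h1, h2⟩
      apply hk
      have h1' : (k.1 : ℕ) = a.toNat := by omega
      have h2' : (k.2 : ℕ) = b.toNat := by omega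
      exact Prod.ext (Fin.ext h1') (Fin.ext h2')
    · intro hc; exact absurd (Finset.mem_univ _) hc
  · unfold zv
    rw [dif_neg h]
    symm
    apply Finset.sum_eq_zero
    intro k _
    rw [if_neg]
    rintro ⟨h1, h2⟩
    apply h
    have := k.1.isLt
    have := k.2.isLt
    omega

lemma pl_eq_sum (f : Cfg N) (r : Fin N × Fin N) :
    pl N f r = ∑ k, bS N r k * f k := by
  unfold pl
  rw [zv_eq_sum, zv_eq_sum, zv_eq_sum, zv_eq_sum, ← Finset.sum_add_distrib,
    ← Finset.sum_add_distrib, ← Finset.sum_add_distrib]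
  apply Finset.sum_congr rfl
  intro k _
  unfold bS
  by_cases hm : memS N r k
  · rw [if_pos hm, one_mul]; unfold memS at hm; split_ifs <;> omega
  · rw [if_neg hm, zero_mul]; unfold memS at hm; split_ifs <;> omega

lemma pl_add (f g : Cfg N) (r : Fin N × Fin N) :
    pl N (f + g) r = pl N f r + pl N g r := by
  rw [pl_eq_sum, pl_eq_sum, pl_eq_sum, ← Finset.sum_add_distrib]
  exact Finset.sum_congr rfl fun k _ => by simp [mul_add]

lemma pl_zero (r : Fin N × Fin N) : pl N (0 : Cfg N) r = 0 := by
  rw [pl_eq_sum]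
  exact Finset.sum_eq_zero fun k _ => mul_zero _

lemma pl_dlt (j : Fin N × Fin N) (r : Fin N × Fin N) :
    pl N (dlt j) r = bS N r j := by
  rw [pl_eq_sum]
  rw [Finset.sum_eq_single j]
  · unfold dlt; rw [if_pos rfl, mul_one]
  · intro k _ hk; unfold dlt; rw [if_neg hk, mul_zero]
  · intro hc; exact absurd (Finset.mem_univ _) hc

/-- order key for the triangularity argument -/
def key (N : ℕ) (k : Fin N × Fin N) : ℕ := (N - 1 - (k.1 : ℕ)) * N + (k.2 : ℕ)

lemma key_lt (r k : Fin N × Fin N) (hm : memS N r k) (hne : k ≠ r) :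
    key N r < key N k := by
  obtain ⟨h1, h2⟩ := hm
  have hr2 := r.2.isLt
  rcases h1 with h1 | h1
  · have hk2 : (k.2 : ℕ) = (r.2 : ℕ) + 1 := by
      rcases h2 with h2 | h2
      · exact absurd (Prod.ext (Fin.ext h1) (Fin.ext h2)) hne
      · exact h2
    unfold key
    rw [h1, hk2]
    exact Nat.add_lt_add_left (by omega) _
  · unfold key
    have he : N - 1 - (k.1 : ℕ) = (N - 1 - (r.1 : ℕ)) + 1 := by
      have := k.1.isLt; omega
    rw [he, add_mul, one_mul, add_assoc]
    apply Nat.add_lt_add_left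
    omega

/-- the duality linear map on configurations -/
noncomputable def mMap (N : ℕ) (f : Cfg N) : Cfg N := fun k => pl N f (k.2, k.1)

lemma mMap_add (f g : Cfg N) : mMap N (f + g) = mMap N f + mMap N g := by
  funext k
  simp only [mMap, Pi.add_apply]
  exact pl_add f g _

lemma mMap_zero : mMap N (0 : Cfg N) = 0 := funext fun k => pl_zero _

lemma mMap_apply (f : Cfg N) (k : Fin N × Fin N) : mMap N f k = pl N f (k.2, k.1) := rfl

lemma mMap_dlt (r : Fin N × Fin N) : mMap N (dlt (r.2, r.1)) = fun k => bS N r k := by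
  funext k
  rw [mMap_apply, pl_dlt]
  exact bS_symm r k

lemma mMap_ker (f : Cfg N) (h : mMap N f = 0) : f = 0 := by
  have hpl : ∀ r : Fin N × Fin N, pl N f r = 0 := by
    intro r
    have := congrFun h (r.2, r.1)
    simpa [mMap] using this
  by_contra hf
  have hne : ∃ k, f k ≠ 0 := by
    by_contra hc; push_neg at hc; exact hf (funext hc)
  obtain ⟨k0, hk0⟩ := hne
  have hsne : (Finset.univ.filter (fun k => f k ≠ 0)).Nonempty :=
    ⟨k0, Finset.mem_filter.mpr ⟨Finset.mem_univ _, hk0⟩⟩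
  obtain ⟨j, hj, hmax⟩ := Finset.exists_max_image _ (key N) hsne
  have hj0 : f j ≠ 0 := (Finset.mem_filter.mp hj).2
  have hpj : pl N f j = f j := by
    rw [pl_eq_sum]
    rw [Finset.sum_eq_single j]
    · rw [bS, if_pos (memS_self j), one_mul]
    · intro k _ hk
      by_cases hmk : memS N j k
      · have hlt : key N j < key N k := key_lt j k hmk hk
        have hfk : f k = 0 := by
          by_contra h0
          have := hmax k (Finset.mem_filter.mpr ⟨Finset.mem_univ _, h0⟩)
          omega
        rw [hfk, mul_zero]
      · rw [bS, if_neg hmk, zero_mul]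
    · intro hc; exact absurd (Finset.mem_univ _) hc
  exact hj0 (by rw [← hpj, hpl j])

lemma chi_mMap_dlt (r : Fin N × Fin N) (g : Cfg N) :
    chi (mMap N (dlt (r.2, r.1))) g = sgn (pl N g r) := by
  unfold chi
  rw [mMap_dlt, pl_eq_sum]

/-- the σ^x operator as an explicit 0-1 matrix -/
lemma pauliX_apply (x y : Fin 2) : pauliX x y = if y = x + 1 then 1 else 0 := by
  fin_cases x <;> fin_cases y <;> simp [pauliX] <;> rfl

lemma xmSite_pauliX (s : Fin N × Fin N) :
    xmSite N pauliX s = Matrix.of (fun f g : Cfg N => if g = f + dlt s then 1 else 0) := by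
  ext f g
  simp only [xmSite, Matrix.of_apply, pauliX_apply]
  by_cases h : g = f + dlt s
  · subst h
    rw [if_pos rfl, if_pos (by simp [dlt]), Finset.prod_eq_one, mul_one]
    intro j hj
    have hjs : j ≠ s := (Finset.mem_erase.mp hj).1
    rw [if_pos]
    simp [dlt, hjs]
  · rw [if_neg h]
    by_cases hs : g s = f s + 1
    · rw [if_pos hs]
      obtain ⟨j, hj⟩ : ∃ j, g j ≠ (f + dlt s) j := Function.ne_iff.mp h
      have hjs : j ≠ s := by
        intro hc; subst hc
        apply hj
        simp [dlt, hs]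
      have hfg : f j ≠ g j := by
        intro hc; apply hj
        simp [dlt, hjs, ← hc]
      have hz : (∏ j ∈ Finset.univ.erase s, if f j = g j then (1:ℂ) else 0) = 0 :=
        Finset.prod_eq_zero (Finset.mem_erase.mpr ⟨hjs, Finset.mem_univ j⟩) (if_neg hfg)
      rw [hz, mul_zero]
    · rw [if_neg hs, zero_mul]

end XmAux

open Polynomial in
/-- charpoly is invariant under unitary conjugation. -/
lemma xm_charpoly_conj {n : Type*} [Fintype n] [DecidableEq n] (U A : Matrix n n ℂ)
    (hU : U * Uᴴ = 1) : (U * A * Uᴴ).charpoly = A.charpoly := by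
  classical
  have hmap : ∀ X Y : Matrix n n ℂ, (X * Y).map (C : ℂ →+* ℂ[X]) =
      X.map (C : ℂ →+* ℂ[X]) * Y.map (C : ℂ →+* ℂ[X]) := by
    intro X Y; exact Matrix.map_mul
  have hone : (U.map (C : ℂ →+* ℂ[X])) * (Uᴴ.map (C : ℂ →+* ℂ[X])) = 1 := by
    rw [← hmap, hU]
    simp
  have hchar : Matrix.charmatrix (U * A * Uᴴ) =
      (U.map (C : ℂ →+* ℂ[X])) * Matrix.charmatrix A * (Uᴴ.map (C : ℂ →+* ℂ[X])) := by
    unfold Matrix.charmatrix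
    simp only [RingHom.mapMatrix_apply]
    rw [Matrix.mul_sub, Matrix.sub_mul]
    congr 1
    · rw [mul_assoc,
        (Matrix.scalar_commute (X : ℂ[X]) (fun r' => Commute.all _ r')
          (Uᴴ.map (C : ℂ →+* ℂ[X]))).eq,
        ← mul_assoc, hone, one_mul]
    · rw [hmap, hmap]
  rw [Matrix.charpoly, Matrix.charpoly, hchar, Matrix.det_mul, Matrix.det_mul]
  have hd : (U.map (C : ℂ →+* ℂ[X])).det * ((Uᴴ).map (C : ℂ →+* ℂ[X])).det = 1 := by
    rw [← Matrix.det_mul, hone, Matrix.det_one]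
  calc (U.map (C : ℂ →+* ℂ[X])).det * (Matrix.charmatrix A).det *
        ((Uᴴ).map (C : ℂ →+* ℂ[X])).det
      = (U.map (C : ℂ →+* ℂ[X])).det * ((Uᴴ).map (C : ℂ →+* ℂ[X])).det *
        (Matrix.charmatrix A).det := by ring
    _ = (Matrix.charmatrix A).det := by rw [hd, one_mul]

open XmAux in
/-- **Exact self-duality of the finite Xu–Moore model with self-dual boundary
conditions**, implemented by a unitary realizing `□ᴵσ^z_{(r¹,r²)} ↦ σ^x_{(r²,r¹)}` and
`σ^x_{(r¹,r²)} ↦ □ᴵσ^z_{(r²,r¹)}`; consequently `H̃(J,h)` and `H̃(h,J)` are unitarily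
equivalent and have the same characteristic polynomial. -/
theorem xu_moore_exact_selfduality (N : ℕ) (hN : 1 ≤ N) :
    ∃ U : Matrix (Fin N × Fin N → Fin 2) (Fin N × Fin N → Fin 2) ℂ,
      U ∈ Matrix.unitaryGroup (Fin N × Fin N → Fin 2) ℂ ∧
      (∀ r : Fin N × Fin N,
        U * xmPlaq N r * Uᴴ = xmSite N pauliX (r.2, r.1) ∧
        U * xmSite N pauliX r * Uᴴ = xmPlaq N (r.2, r.1)) ∧
      (∀ J h : ℝ,
        U * xmH N J h * Uᴴ = xmH N h J ∧
        (xmH N J h).charpoly = (xmH N h J).charpoly) := by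
  classical
  set n : ℕ := Fintype.card (Cfg N) with hn
  have hnpos : 0 < n := Fintype.card_pos
  set c : ℂ := ((Real.sqrt n : ℝ) : ℂ)⁻¹ with hc
  have hc2 : c * c = ((n : ℂ))⁻¹ := by
    rw [hc, ← mul_inv]
    congr 1
    rw [← Complex.ofReal_mul, Real.mul_self_sqrt (by positivity)]
    norm_num
  have hcstar : (starRingEnd ℂ) c = c := by
    rw [hc]
    simp
  set U : Matrix (Cfg N) (Cfg N) ℂ :=
    Matrix.of (fun f g : Cfg N => c * chi (mMap N f) g) with hUdef
  have hUapp : ∀ f g : Cfg N, U f g = c * chi (mMap N f) g := fun f g => rfl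
  have hUH : ∀ f g : Cfg N, Uᴴ f g = c * chi (mMap N g) f := by
    intro f g
    rw [Matrix.conjTranspose_apply, hUapp, star_mul', ← starRingEnd_apply, ← starRingEnd_apply,
      hcstar, chi_conj]
  -- unitarity
  have hUU : U * Uᴴ = 1 := by
    ext f g
    rw [Matrix.mul_apply, Matrix.one_apply]
    have hterm : ∀ h : Cfg N, U f h * Uᴴ h g = (c * c) * chi (mMap N (f + g)) h := by
      intro h
      rw [hUapp, hUH, mMap_add, chi_add_left]
      ring
    rw [Finset.sum_congr rfl fun h _ => hterm h, ← Finset.mul_sum, sum_chi]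
    by_cases hfg : f = g
    · subst hfg
      have hff : f + f = (0 : Cfg N) := (add_eq_zero_iff f f).mpr rfl
      rw [if_pos rfl, hff, mMap_zero, if_pos rfl, hc2, ← hn]
      exact inv_mul_cancel₀ (Nat.cast_ne_zero.mpr hnpos.ne')
    · rw [if_neg hfg, if_neg, mul_zero]
      intro hc0
      have := mMap_ker _ hc0
      exact hfg ((add_eq_zero_iff f g).mp this)
  have hUmem : U ∈ Matrix.unitaryGroup (Cfg N) ℂ := Matrix.mem_unitaryGroup_iff.mpr hUU
  -- the two conjugation identities
  have hPlaqC : ∀ r : Fin N × Fin N, U * xmPlaq N r = xmSite N pauliX (r.2, r.1) * U := by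
    intro r
    ext f g
    rw [xmPlaq_eq, xmSite_pauliX, Matrix.mul_diagonal]
    rw [Matrix.mul_apply]
    have hterm : ∀ h : Cfg N,
        (Matrix.of (fun f g : Cfg N => if g = f + dlt (r.2, r.1) then (1:ℂ) else 0)) f h * U h g
          = if h = f + dlt (r.2, r.1) then U h g else 0 := by
      intro h
      rw [Matrix.of_apply, ite_mul, one_mul, zero_mul]
    rw [Finset.sum_congr rfl fun h _ => hterm h, Finset.sum_ite_eq' Finset.univ _ _,
      if_pos (Finset.mem_univ _)]
    rw [hUapp, hUapp, mMap_add, chi_add_left, chi_mMap_dlt]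
    ring
  have hXC : ∀ r : Fin N × Fin N, U * xmSite N pauliX r = xmPlaq N (r.2, r.1) * U := by
    intro r
    ext f g
    rw [xmPlaq_eq, xmSite_pauliX, Matrix.diagonal_mul]
    rw [Matrix.mul_apply]
    have hterm : ∀ h : Cfg N,
        U f h * (Matrix.of (fun f g : Cfg N => if g = f + dlt r then (1:ℂ) else 0)) h g
          = if h = g + dlt r then U f h else 0 := by
      intro h
      rw [Matrix.of_apply]
      by_cases hgh : h = g + dlt r
      · rw [if_pos hgh, if_pos ((eq_add_dlt_comm h g r).mpr hgh), mul_one]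
      · rw [if_neg hgh, if_neg (fun hc => hgh ((eq_add_dlt_comm h g r).mp hc)), mul_zero]
    rw [Finset.sum_congr rfl fun h _ => hterm h, Finset.sum_ite_eq' Finset.univ _ _,
      if_pos (Finset.mem_univ _)]
    rw [hUapp, hUapp, chi_add_right, chi_dlt]
    rw [mMap_apply]
    ring
  have hPlaq : ∀ r : Fin N × Fin N, U * xmPlaq N r * Uᴴ = xmSite N pauliX (r.2, r.1) := by
    intro r
    rw [hPlaqC r, mul_assoc, hUU, mul_one]
  have hX : ∀ r : Fin N × Fin N, U * xmSite N pauliX r * Uᴴ = xmPlaq N (r.2, r.1) := by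
    intro r
    rw [hXC r, mul_assoc, hUU, mul_one]
  refine ⟨U, hUmem, fun r => ⟨hPlaq r, hX r⟩, ?_⟩
  intro J h
  have hH : U * xmH N J h * Uᴴ = xmH N h J := by
    rw [xmH, xmH]
    rw [Matrix.mul_neg, Matrix.neg_mul, neg_inj]
    rw [Matrix.mul_sum, Matrix.sum_mul]
    apply Fintype.sum_equiv (Equiv.prodComm (Fin N) (Fin N))
    intro r
    rw [Matrix.mul_add, Matrix.add_mul]
    rw [Matrix.mul_smul, Matrix.smul_mul, Matrix.mul_smul, Matrix.smul_mul]
    rw [hPlaq r, hX r]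
    exact add_comm _ _
  exact ⟨hH, by rw [← hH]; exact (xm_charpoly_conj U (xmH N J h) hUU).symm⟩
end
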